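/- Assume D = 0, Re(λ_i) ≠ 0 for all i, and λ_i + λ_k ≠ 0 for all i, k (so that no λ_i is purely imaginary and each H(−λ_i) is well defined). Then the limit as ω → +∞ of ‖H‖²_{H2,ω} exists, is finite, and equals tr( Σ_{i : Re(λ_i)<0} φ_i·H(−λ_i)ᵀ ) − tr( Σ_{i : Re(λ_i)>0} φ_i·H(−λ_i)ᵀ ). -/

import Mathlib

open Complex Matrix MeasureTheory intervalIntegral BigOperators

/-- Strictly proper transfer function `H(s) = Σᵢ (s − λᵢ)⁻¹ • φᵢ`. -/
noncomputable def transferH {n n_u n_y : ℕ} (lam : Fin n → ℂ)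
    (φ : Fin n → Matrix (Fin n_y) (Fin n_u) ℂ) (s : ℂ) : Matrix (Fin n_y) (Fin n_u) ℂ :=
  ∑ i, (s - lam i)⁻¹ • φ i

/-- Squared frequency-limited H2-norm:
`‖H‖²_{H2,ω} = (1/(2π)) ∫_{−ω}^{ω} tr(H(iν)·H(−iν)ᵀ) dν`. -/
noncomputable def h2wSq {n n_u n_y : ℕ} (lam : Fin n → ℂ)
    (φ : Fin n → Matrix (Fin n_y) (Fin n_u) ℂ) (ω : ℝ) : ℂ :=
  (2 * (Real.pi : ℂ))⁻¹ * ∫ ν : ℝ in (-ω)..ω,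
    (transferH lam φ (Complex.I * (ν : ℂ)) *
      (transferH lam φ (-(Complex.I * (ν : ℂ))))ᵀ).trace

/-!
Partial fractions, together with the symmetry `tr(φᵢ φₖᵀ) = tr(φₖ φᵢᵀ)`, give
`tr(H(s) H(-s)ᵀ) = Σᵢ ((s - λᵢ)⁻¹ + (-s - λᵢ)⁻¹) · tr(φᵢ H(-λᵢ)ᵀ)`.
On the imaginary axis, with `λ = a + ib`, `(iν - λ)⁻¹` has the elementary primitive
`-arctan((ν - b)/a) - (i/2) log(a² + (ν - b)²)`. Over `[-ω, ω]` the logarithms cancel in the limit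
and the arctangents tend to `±π/2`, so the integral of each paired pole tends to `-2π sign(a)`.
-/

open Filter Topology
open scoped Real

noncomputable def invIMulSubPrimitive (a t : ℝ) : ℂ :=
  -(Real.arctan (t / a) : ℂ) - I / 2 * (Real.log (a ^ 2 + t ^ 2) : ℂ)

theorem sub_ne_zero_of_re_eq_zero {l s : ℂ} (hl : l.re ≠ 0) (hs : s.re = 0) : s - l ≠ 0 := by
  intro h
  simpa [hs, hl] using congrArg Complex.re h

theorem hasDerivAt_invIMulSubPrimitive {a : ℝ} (ha : a ≠ 0) (t : ℝ) :
    HasDerivAt (invIMulSubPrimitive a) (I * t - a)⁻¹ t := by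
  have hpos : 0 < a ^ 2 + t ^ 2 := by positivity
  have harctan := ((hasDerivAt_id t).div_const a).arctan
  have hlog := (((hasDerivAt_id t).pow 2).const_add (a ^ 2)).log hpos.ne'
  refine (harctan.ofReal_comp.neg.sub (hlog.ofReal_comp.const_mul (I / 2))).congr_deriv ?_
  have hne : ((a ^ 2 + t ^ 2 : ℝ) : ℂ) ≠ 0 := by exact_mod_cast hpos.ne'
  have hac : (a : ℂ) ≠ 0 := by exact_mod_cast ha
  refine eq_inv_of_mul_eq_one_left ?_
  simp only [id, Pi.pow_apply]
  push_cast at hne ⊢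
  field_simp
  linear_combination -(t : ℂ) ^ 2 * I_sq

theorem tendsto_log_sq_add_sq_sub_log_sq (a c : ℝ) :
    Tendsto (fun ω => Real.log (a ^ 2 + (ω + c) ^ 2) - Real.log (ω ^ 2)) atTop (𝓝 0) := by
  have hratio : Tendsto (fun ω : ℝ => (a / ω) ^ 2 + (1 + c / ω) ^ 2) atTop (𝓝 1) := by
    have h0 : Tendsto (fun ω : ℝ => ω⁻¹) atTop (𝓝 0) := tendsto_inv_atTop_zero
    simpa [div_eq_mul_inv] using
      ((h0.const_mul a).pow 2).add ((tendsto_const_nhds (x := (1 : ℝ)).add (h0.const_mul c)).pow 2)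
  have hlog := (Real.continuousAt_log one_ne_zero).tendsto.comp hratio
  rw [Real.log_one] at hlog
  refine hlog.congr' ?_
  filter_upwards [eventually_gt_atTop (max 0 (-c))] with ω hω
  have hω : 0 < ω := lt_of_le_of_lt (le_max_left _ _) hω
  have hωc : 0 < ω + c := by linarith [le_max_right 0 (-c)]
  have hsplit : (a / ω) ^ 2 + (1 + c / ω) ^ 2 = (a ^ 2 + (ω + c) ^ 2) / ω ^ 2 := by
    field_simp
  rw [Function.comp_apply, hsplit, Real.log_div (by positivity) (by positivity)]

theorem tendsto_arctan_add_div_atTop {a : ℝ} (ha : a ≠ 0) (c : ℝ) :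
    Tendsto (fun ω => Real.arctan ((ω + c) / a)) atTop (𝓝 (Real.sign a * (π / 2))) := by
  have hshift : Tendsto (fun ω : ℝ => ω + c) atTop atTop :=
    tendsto_atTop_add_const_right _ c tendsto_id
  rcases ha.lt_or_gt with hneg | hpos
  · rw [Real.sign_of_neg hneg, neg_one_mul]
    exact (Real.tendsto_arctan_atBot.mono_right nhdsWithin_le_nhds).comp
      (hshift.atTop_div_const_of_neg hneg)
  · rw [Real.sign_of_pos hpos, one_mul]
    exact (Real.tendsto_arctan_atTop.mono_right nhdsWithin_le_nhds).comp
      (hshift.atTop_div_const hpos)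

noncomputable def pairedPole (l s : ℂ) : ℂ := (s - l)⁻¹ + (-s - l)⁻¹

noncomputable def pairedPolePrimitive (l : ℂ) (ν : ℝ) : ℂ :=
  invIMulSubPrimitive l.re (ν - l.im) - invIMulSubPrimitive l.re (-ν - l.im)

theorem I_mul_sub_im_sub_re (l : ℂ) (t : ℝ) : I * ((t - l.im : ℝ) : ℂ) - l.re = I * t - l := by
  conv_rhs => rw [← re_add_im l]
  push_cast
  ring

theorem hasDerivAt_pairedPolePrimitive {l : ℂ} (hl : l.re ≠ 0) (ν : ℝ) :
    HasDerivAt (pairedPolePrimitive l) (pairedPole l (I * ν)) ν := by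
  have hplus := (hasDerivAt_invIMulSubPrimitive hl (ν - l.im)).comp_sub_const ν l.im
  have hminus := (hasDerivAt_invIMulSubPrimitive hl (-ν - l.im)).scomp ν
    ((hasDerivAt_neg ν).sub_const l.im)
  refine (hplus.sub hminus).congr_deriv ?_
  rw [I_mul_sub_im_sub_re, I_mul_sub_im_sub_re, pairedPole, ofReal_neg, mul_neg, neg_one_smul,
    sub_neg_eq_add]

theorem continuous_pairedPole_I_mul {l : ℂ} (hl : l.re ≠ 0) :
    Continuous fun ν : ℝ => pairedPole l (I * ν) := by
  unfold pairedPole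
  refine .add (.inv₀ (by fun_prop) fun ν => sub_ne_zero_of_re_eq_zero hl ?_)
    (.inv₀ (by fun_prop) fun ν => sub_ne_zero_of_re_eq_zero hl ?_) <;> simp

theorem integral_pairedPole_I_mul {l : ℂ} (hl : l.re ≠ 0) (ω : ℝ) :
    ∫ ν in -ω..ω, pairedPole l (I * ν) = 2 * pairedPolePrimitive l ω := by
  rw [integral_eq_sub_of_hasDerivAt (fun ν _ => hasDerivAt_pairedPolePrimitive hl ν)
    ((continuous_pairedPole_I_mul hl).intervalIntegrable _ _)]
  simp only [pairedPolePrimitive, neg_neg]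
  ring

theorem tendsto_pairedPolePrimitive {l : ℂ} (hl : l.re ≠ 0) :
    Tendsto (pairedPolePrimitive l) atTop (𝓝 (-π * Real.sign l.re)) := by
  have harctan := (tendsto_arctan_add_div_atTop hl (-l.im)).add
    (tendsto_arctan_add_div_atTop hl l.im)
  have hlog := (tendsto_log_sq_add_sq_sub_log_sq l.re (-l.im)).sub
    (tendsto_log_sq_add_sq_sub_log_sq l.re l.im)
  have hlim := ((continuous_ofReal.tendsto _).comp harctan).neg.sub
    (((continuous_ofReal.tendsto _).comp hlog).const_mul (I / 2))
  convert hlim using 1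
  · ext ω
    have hodd : (-ω - l.im) / l.re = -((ω + l.im) / l.re) := by ring
    have hsq : (-ω - l.im) ^ 2 = (ω + l.im) ^ 2 := by ring
    simp only [pairedPolePrimitive, invIMulSubPrimitive, Function.comp_apply, hodd, hsq,
      Real.arctan_neg, ← sub_eq_add_neg, ofReal_add, ofReal_sub, ofReal_neg]
    ring
  · congr 1
    push_cast
    ring

theorem tendsto_integral_pairedPole_I_mul {l : ℂ} (hl : l.re ≠ 0) :
    Tendsto (fun ω : ℝ => ∫ ν in -ω..ω, pairedPole l (I * ν)) atTop
      (𝓝 (-2 * π * Real.sign l.re)) := by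
  simp only [integral_pairedPole_I_mul hl]
  convert (tendsto_pairedPolePrimitive hl).const_mul 2 using 2
  ring

theorem inv_sub_mul_inv_neg_sub {K : Type*} [Field K] {s a b : K} (ha : s - a ≠ 0)
    (hb : -s - b ≠ 0) (hab : a + b ≠ 0) :
    (s - a)⁻¹ * (-s - b)⁻¹ = (-a - b)⁻¹ * ((s - a)⁻¹ + (-s - b)⁻¹) := by
  have hab' : -a - b ≠ 0 := by rwa [← neg_add', neg_ne_zero]
  field_simp
  ring

theorem trace_mul_transpose_comm {m k R : Type*} [Fintype m] [Fintype k] [CommSemiring R]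
    (A B : Matrix m k R) : (A * Bᵀ).trace = (B * Aᵀ).trace := by
  rw [← trace_transpose, transpose_mul, transpose_transpose]

section TransferFunction

variable {n n_u n_y : ℕ} (lam : Fin n → ℂ) (φ : Fin n → Matrix (Fin n_y) (Fin n_u) ℂ)

theorem trace_mul_transferH_transpose (A : Matrix (Fin n_y) (Fin n_u) ℂ) (t : ℂ) :
    (A * (transferH lam φ t)ᵀ).trace = ∑ k, (t - lam k)⁻¹ * (A * (φ k)ᵀ).trace := by
  simp only [transferH, transpose_sum, transpose_smul, Matrix.mul_sum, Matrix.mul_smul,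
    trace_sum, trace_smul, smul_eq_mul]

theorem trace_transferH_mul_transpose (B : Matrix (Fin n_u) (Fin n_y) ℂ) (s : ℂ) :
    (transferH lam φ s * B).trace = ∑ i, (s - lam i)⁻¹ * (φ i * B).trace := by
  simp only [transferH, Matrix.sum_mul, Matrix.smul_mul, trace_sum, trace_smul, smul_eq_mul]

theorem trace_transferH_mul_transferH_neg_transpose {s : ℂ} (hs : ∀ i, s - lam i ≠ 0)
    (hs' : ∀ i, -s - lam i ≠ 0) (hsum : ∀ i k, lam i + lam k ≠ 0) :
    (transferH lam φ s * (transferH lam φ (-s))ᵀ).trace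
      = ∑ i, pairedPole (lam i) s * (φ i * (transferH lam φ (-lam i))ᵀ).trace := by
  rw [trace_transferH_mul_transpose]
  simp only [trace_mul_transferH_transpose, Finset.mul_sum]
  set c : Fin n → Fin n → ℂ := fun i k => (φ i * (φ k)ᵀ).trace
  have hcomm : ∀ i k, c i k = c k i := fun i k => trace_mul_transpose_comm _ _
  calc ∑ i, ∑ k, (s - lam i)⁻¹ * ((-s - lam k)⁻¹ * c i k)
      = ∑ i, ∑ k, (-lam i - lam k)⁻¹ * c i k * (s - lam i)⁻¹
          + ∑ i, ∑ k, (-lam k - lam i)⁻¹ * c k i * (-s - lam k)⁻¹ := by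
        simp only [← Finset.sum_add_distrib]
        refine Finset.sum_congr rfl fun i _ => Finset.sum_congr rfl fun k _ => ?_
        rw [← mul_assoc, inv_sub_mul_inv_neg_sub (hs i) (hs' k) (hsum i k), hcomm k i,
          neg_sub_left, neg_sub_left, add_comm (lam k)]
        ring
    _ = ∑ i, ∑ k, (-lam i - lam k)⁻¹ * c i k * (s - lam i)⁻¹
          + ∑ i, ∑ k, (-lam i - lam k)⁻¹ * c i k * (-s - lam i)⁻¹ := by
        rw [Finset.sum_comm (f := fun i k => (-lam k - lam i)⁻¹ * c k i * (-s - lam k)⁻¹)]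
    _ = ∑ i, ∑ k, pairedPole (lam i) s * ((-lam i - lam k)⁻¹ * c i k) := by
        simp only [← Finset.sum_add_distrib, pairedPole]
        refine Finset.sum_congr rfl fun i _ => Finset.sum_congr rfl fun k _ => ?_
        ring

theorem h2wSq_eq_sum (hre : ∀ i, (lam i).re ≠ 0) (hsum : ∀ i k, lam i + lam k ≠ 0) (ω : ℝ) :
    h2wSq lam φ ω = (2 * (π : ℂ))⁻¹ * ∑ i, (∫ ν in -ω..ω, pairedPole (lam i) (I * ν))
      * (φ i * (transferH lam φ (-lam i))ᵀ).trace := by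
  have hdecomp : ∀ ν : ℝ, (transferH lam φ (I * ν) * (transferH lam φ (-(I * ν)))ᵀ).trace
      = ∑ i, pairedPole (lam i) (I * ν) * (φ i * (transferH lam φ (-lam i))ᵀ).trace :=
    fun ν => trace_transferH_mul_transferH_neg_transpose lam φ
      (fun i => sub_ne_zero_of_re_eq_zero (hre i) (by simp))
      (fun i => sub_ne_zero_of_re_eq_zero (hre i) (by simp)) hsum
  rw [h2wSq, integral_congr fun ν _ => hdecomp ν, integral_finsetSum fun i _ =>
    ((continuous_pairedPole_I_mul (hre i)).intervalIntegrable _ _).mul_const _]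
  simp only [intervalIntegral.integral_mul_const]

end TransferFunction

theorem sum_filter_neg_sub_sum_filter_pos {ι : Type*} (s : Finset ι) (x : ι → ℝ) (r : ι → ℂ) :
    ∑ i ∈ s with x i < 0, r i - ∑ i ∈ s with 0 < x i, r i
      = -∑ i ∈ s, (Real.sign (x i) : ℂ) * r i := by
  rw [Finset.sum_filter, Finset.sum_filter, ← Finset.sum_sub_distrib, ← Finset.sum_neg_distrib]
  refine Finset.sum_congr rfl fun i _ => ?_
  rcases lt_trichotomy (x i) 0 with h | h | h
  · simp [h, h.not_gt, Real.sign_of_neg h]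
  · simp [h]
  · simp [h, h.not_gt, Real.sign_of_pos h]

open Filter Topology in
theorem stmt_4_general (n n_u n_y : ℕ)
    (lam : Fin n → ℂ)
    (φ : Fin n → Matrix (Fin n_y) (Fin n_u) ℂ)
    (hre : ∀ i, (lam i).re ≠ 0) (hsum : ∀ i k, lam i + lam k ≠ 0) :
    Tendsto (fun ω : ℝ => h2wSq lam φ ω) atTop
      (nhds ((∑ i ∈ Finset.univ.filter (fun i => (lam i).re < 0),
                φ i * (transferH lam φ (-lam i))ᵀ).trace
             - (∑ i ∈ Finset.univ.filter (fun i => 0 < (lam i).re),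
                φ i * (transferH lam φ (-lam i))ᵀ).trace)) := by
  have hlim := (tendsto_finsetSum Finset.univ fun i _ =>
    (tendsto_integral_pairedPole_I_mul (hre i)).mul_const
      (φ i * (transferH lam φ (-lam i))ᵀ).trace).const_mul (2 * (π : ℂ))⁻¹
  rw [trace_sum, trace_sum, sum_filter_neg_sub_sum_filter_pos]
  convert hlim using 2 with ω
  · exact h2wSq_eq_sum lam φ hre hsum ω
  · rw [Finset.mul_sum, ← Finset.sum_neg_distrib]
    refine Finset.sum_congr rfl fun i _ => ?_
    field_simp

open Filter Topology in
theorem stmt_4 (n n_u n_y : ℕ) (hn : 0 < n) (hnu : 0 < n_u) (hny : 0 < n_y)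
    (lam : Fin n → ℂ) (hdist : Function.Injective lam)
    (φ : Fin n → Matrix (Fin n_y) (Fin n_u) ℂ)
    (hre : ∀ i, (lam i).re ≠ 0) (hsum : ∀ i k, lam i + lam k ≠ 0) :
    Tendsto (fun ω : ℝ => h2wSq lam φ ω) atTop
      (nhds ((∑ i ∈ Finset.univ.filter (fun i => (lam i).re < 0),
                φ i * (transferH lam φ (-lam i))ᵀ).trace
             - (∑ i ∈ Finset.univ.filter (fun i => 0 < (lam i).re),
                φ i * (transferH lam φ (-lam i))ᵀ).trace)) :=
  stmt_4_general n n_u n_y lam φ hre hsum
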